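/- Let P be a positive opetope, x_l ∈ P_l a face and x_{l+1} ∈ ∂(x_{l+1}) with x_l = γ(x_{l+1}). Then the extension function (−)/x_l : Flags[x_n, x_{l+1}] → Flags[x_n, x_l], appending x_l to a flag ending at x_{l+1}, preserves the successor function and the flag order. If instead x_l ∈ δ(x_{l+1}), then the same extension function preserves the successor and order as a map from the opposite order Flags^{op}[x_n, x_{l+1}] to Flags[x_n, x_l]. -/

import Mathlib

open scoped Classical

structure PHg where
  Face : ℕ → Type
  fin : ∀ k, Finite (Face k)
  γ : ∀ k, Face (k+1) → Face k
  δ : ∀ k, Face (k+1) → Face k → Prop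
  δ_total : ∀ k a, ∃ x, δ k a x
  δ0_fun : ∀ (a : Face 1) (x y : Face 0), δ 0 a x → δ 0 a y → x = y
  bounded : ∃ n, ∀ k, n < k → IsEmpty (Face k)

abbrev PHg.FaceS (S : PHg) : Type := Σ k, S.Face k

/-- The codomain operation, viewed on faces of arbitrary dimension
(identity in dimension 0). -/
def gammaS (S : PHg) : S.FaceS → S.FaceS
  | ⟨0, x⟩ => ⟨0, x⟩
  | ⟨k+1, x⟩ => ⟨k, S.γ k x⟩

/-- `x ∈ δ(q)`. -/
def inDelta (S : PHg) (x q : S.FaceS) : Prop :=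
  match q with
  | ⟨0, _⟩ => False
  | ⟨k+1, a⟩ => ∃ h : x.1 = k, S.δ k a (h ▸ x.2)

/-- `x = γ(q)` (for `q` of positive dimension). -/
def inGammaS (S : PHg) (x q : S.FaceS) : Prop := 0 < q.1 ∧ gammaS S q = x

/-- `x ∈ ∂(q) = {γ(q)} ∪ δ(q)`. -/
def inBoundary (S : PHg) (x q : S.FaceS) : Prop := inGammaS S x q ∨ inDelta S x q

def covPlus (S : PHg) (a b : S.FaceS) : Prop :=
  ∃ α, inDelta S a α ∧ gammaS S α = b

/-- The upper order `<⁺`. -/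
def ltPlus (S : PHg) : S.FaceS → S.FaceS → Prop := Relation.TransGen (covPlus S)

def lePlus (S : PHg) (a b : S.FaceS) : Prop := a = b ∨ ltPlus S a b

def perpPlus (S : PHg) (a b : S.FaceS) : Prop := ltPlus S a b ∨ ltPlus S b a

def covMinus (S : PHg) (a b : S.FaceS) : Prop := 0 < a.1 ∧ inDelta S (gammaS S a) b

/-- The lower order `<⁻`. -/
def ltMinus (S : PHg) : S.FaceS → S.FaceS → Prop := Relation.TransGen (covMinus S)

def perpMinus (S : PHg) (a b : S.FaceS) : Prop := ltMinus S a b ∨ ltMinus S b a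

/-- Iterated codomain `γ^{(k)}`. -/
def gammaIter (S : PHg) (k : ℕ) (p : S.FaceS) : S.FaceS := (gammaS S)^[p.1 - k] p

/-- `X` is a `<⁺`-interval. -/
def IntervalPlus (S : PHg) (X : Set S.FaceS) : Prop :=
  X = ∅ ∨ ∃ x0 x1, lePlus S x0 x1 ∧ X = {x | lePlus S x0 x ∧ lePlus S x x1}

def hasDim (S : PHg) (n : ℕ) : Prop :=
  Nonempty (S.Face n) ∧ ∀ k, n < k → IsEmpty (S.Face k)

/-- A positive opetope: a nonempty positive hypergraph satisfying globularity,
strictness, disjointness, pencil linearity, and having at most one face outside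
`δ(S_{k+1})` in each dimension. -/
structure IsOpetope (S : PHg) : Prop where
  ne : Nonempty (S.Face 0)
  glob_gamma : ∀ a : S.FaceS, 2 ≤ a.1 →
    ({gammaS S (gammaS S a)} : Set S.FaceS) =
      {x | ∃ y, inDelta S y a ∧ gammaS S y = x} \ {x | ∃ y, inDelta S y a ∧ inDelta S x y}
  glob_delta : ∀ a : S.FaceS, 2 ≤ a.1 →
    {x | inDelta S x (gammaS S a)} =
      {x | ∃ y, inDelta S y a ∧ inDelta S x y} \ {x | ∃ y, inDelta S y a ∧ gammaS S y = x}
  strict : ∀ a, ¬ ltPlus S a a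
  linear0 : ∀ a b : S.FaceS, a.1 = 0 → b.1 = 0 → a = b ∨ perpPlus S a b
  disj : ∀ a b : S.FaceS, 0 < a.1 → ¬ (perpMinus S a b ∧ perpPlus S a b)
  pencil_gamma : ∀ x a b, inGammaS S x a → inGammaS S x b → a = b ∨ perpPlus S a b
  pencil_delta : ∀ x a b, inDelta S x a → inDelta S x b → a = b ∨ perpPlus S a b
  size_le_one : ∀ k (a b : S.Face k),
    (¬ ∃ α : S.Face (k+1), S.δ k α a) → (¬ ∃ α : S.Face (k+1), S.δ k α b) → a = b
/-- A restricted flag from dimension `m` down to dimension `l`,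
encoded as a function `ℕ → S.FaceS` (entries outside `[l,m]` are irrelevant). -/
def IsRFlag (S : PHg) (m l : ℕ) (F : ℕ → S.FaceS) : Prop :=
  (∀ i, l ≤ i → i ≤ m → (F i).1 = i) ∧
  (∀ i, l ≤ i → i < m → inBoundary S (F i) (F (i+1)))

/-- The pencil order `≺ₓ` on the pencil over `x`. -/
def pencilLt (S : PHg) (x a b : S.FaceS) : Prop :=
  (inGammaS S x b ∧ inDelta S x a) ∨
  (inDelta S x a ∧ inDelta S x b ∧ ltPlus S a b) ∨
  (inGammaS S x a ∧ inGammaS S x b ∧ ltPlus S b a)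

/-- The sign of the flag segment `[F j, …, F l]`. -/
noncomputable def sgnSeg (S : PHg) (l : ℕ) (F : ℕ → S.FaceS) : ℕ → ℤ
  | 0 => 1
  | j+1 => if l ≤ j ∧ inDelta S (F j) (F (j+1)) then -(sgnSeg S l F j) else sgnSeg S l F j

/-- The flag order `◁` on flags from dimension `m` down to `l`. -/
def flagLt (S : PHg) (l m : ℕ) (F G : ℕ → S.FaceS) : Prop :=
  ∃ k, l ≤ k ∧ k ≤ m ∧ (∀ i, l ≤ i → i < k → F i = G i) ∧ F k ≠ G k ∧
    ((k = 0 ∧ ltPlus S (G 0) (F 0)) ∨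
     (0 < k ∧ sgnSeg S l F (k-1) = 1 ∧ pencilLt S (F (k-1)) (F k) (G k)) ∨
     (0 < k ∧ sgnSeg S l F (k-1) = -1 ∧ pencilLt S (F (k-1)) (G k) (F k)))

/-- `i` is the low level `ll` of the flag `F` (with top dimension `n`). -/
def LowLevelT (S : PHg) (n : ℕ) (F : ℕ → S.FaceS) (i : ℕ) : Prop :=
  i + 2 ≤ n ∧ inDelta S (F (i+1)) (F (i+2)) ∧
    ∀ j, i < j → j + 2 ≤ n → ¬ inDelta S (F (j+1)) (F (j+2))

/-- Membership in `Flags[t / b]`, flags from top face `t` (dim `m`) to bottom face `b` (dim `l`). -/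
def MemFlags (S : PHg) (l m : ℕ) (t b : S.FaceS) (F : ℕ → S.FaceS) : Prop :=
  IsRFlag S m l F ∧ F m = t ∧ F l = b

def EqOnFl {α : Type*} (l m : ℕ) (F G : ℕ → α) : Prop :=
  ∀ i, l ≤ i → i ≤ m → F i = G i

/-- `G` is the successor of `F` in `Flags[t / b]` with respect to the flag order. -/
def SuccFl (S : PHg) (l m : ℕ) (t b : S.FaceS) (F G : ℕ → S.FaceS) : Prop :=
  MemFlags S l m t b F ∧ MemFlags S l m t b G ∧ flagLt S l m F G ∧
  ∀ H, MemFlags S l m t b H → flagLt S l m F H → (EqOnFl l m G H ∨ flagLt S l m G H)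

/-! Appending `x_l` to two flags through `x_{l+1}` changes neither their faces in dimensions
`≥ l + 1` nor the dimension at which they first differ, which is at least `l + 2`. It only changes
the sign of the segments below that dimension, and it flips it exactly when `x_l ∈ δ(x_{l+1})`,
which reverses every pencil comparison deciding the order. A flag `H` ending at `x_l` but not
passing through `x_{l+1}` first differs from every extended flag in dimension `l + 1`, where the
sign is `+1`; so all extended flags compare with `H` in the same way and `H` never lies strictly
between an extended flag and the extension of its successor. -/

section FlagExtension

open Function

variable {S : PHg}

lemma update_apply_of_lt {α : Type*} {F : ℕ → α} {l i : ℕ} (x : α) (h : l < i) :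
    update F l x i = F i :=
  update_of_ne h.ne' x F

lemma forall_update_eq_update_iff {α : Type*} (F G : ℕ → α) (x : α) (l k : ℕ) :
    (∀ i, l ≤ i → i < k → update F l x i = update G l x i) ↔
      ∀ i, l + 1 ≤ i → i < k → F i = G i := by
  constructor
  · intro h i hi hik
    simpa only [update_apply_of_lt x hi] using h i (by omega) hik
  · intro h i hi hik
    rcases hi.eq_or_lt with rfl | hlt
    · rw [update_self, update_self]
    · rw [update_apply_of_lt x hlt, update_apply_of_lt x hlt]
      exact h i hlt hik

lemma sgnSeg_eq_one_or_eq_neg_one (l : ℕ) (F : ℕ → S.FaceS) :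
    ∀ j, sgnSeg S l F j = 1 ∨ sgnSeg S l F j = -1
  | 0 => Or.inl rfl
  | j + 1 => by
      rcases sgnSeg_eq_one_or_eq_neg_one l F j with h | h <;> rw [sgnSeg] <;> split <;> simp [h]

lemma sgnSeg_congr {l : ℕ} {F G : ℕ → S.FaceS} :
    ∀ {j}, (∀ i, l ≤ i → i ≤ j → F i = G i) → sgnSeg S l F j = sgnSeg S l G j
  | 0, _ => rfl
  | j + 1, h => by
      rw [sgnSeg, sgnSeg, sgnSeg_congr fun i hi hij => h i hi (by omega)]
      by_cases hlj : l ≤ j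
      · rw [h j hlj (by omega), h (j + 1) (by omega) le_rfl]
      · simp only [hlj, false_and, if_false]

lemma sgnSeg_of_le {l : ℕ} {F : ℕ → S.FaceS} : ∀ {j}, j ≤ l → sgnSeg S l F j = 1
  | 0, _ => rfl
  | j + 1, h => by
      rw [sgnSeg, if_neg fun hh => by omega]
      exact sgnSeg_of_le (by omega)

lemma sgnSeg_eq_sgnSeg_succ_of_not_inDelta {l : ℕ} {F : ℕ → S.FaceS}
    (hF : ¬ inDelta S (F l) (F (l + 1))) : ∀ j, sgnSeg S l F j = sgnSeg S (l + 1) F j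
  | 0 => rfl
  | j + 1 => by
      rw [sgnSeg, sgnSeg, sgnSeg_eq_sgnSeg_succ_of_not_inDelta hF j]
      refine if_congr ⟨fun ⟨hlj, hj⟩ => ⟨?_, hj⟩, fun ⟨hlj, hj⟩ => ⟨by omega, hj⟩⟩ rfl rfl
      rcases hlj.eq_or_lt with rfl | hlt
      · exact absurd hj hF
      · exact hlt

lemma sgnSeg_eq_neg_sgnSeg_succ_of_inDelta {l : ℕ} {F : ℕ → S.FaceS}
    (hF : inDelta S (F l) (F (l + 1))) {j : ℕ} (hj : l + 1 ≤ j) :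
    sgnSeg S l F j = -sgnSeg S (l + 1) F j := by
  induction j, hj using Nat.le_induction with
  | base => rw [sgnSeg, if_pos ⟨le_rfl, hF⟩, sgnSeg_of_le le_rfl, sgnSeg_of_le le_rfl]
  | succ j hj ih =>
      rw [sgnSeg, sgnSeg]
      by_cases hδ : inDelta S (F j) (F (j + 1))
      · rw [if_pos ⟨by omega, hδ⟩, if_pos ⟨by omega, hδ⟩, ih]
      · rw [if_neg fun hh => hδ hh.2, if_neg fun hh => hδ hh.2, ih]

lemma sgnSeg_update_of_not_inDelta {l : ℕ} {F : ℕ → S.FaceS} {x : S.FaceS}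
    (hx : ¬ inDelta S x (F (l + 1))) (j : ℕ) :
    sgnSeg S l (update F l x) j = sgnSeg S (l + 1) F j := by
  rw [sgnSeg_eq_sgnSeg_succ_of_not_inDelta
    (by rwa [update_self, update_apply_of_lt x l.lt_succ_self])]
  exact sgnSeg_congr fun i hi _ => update_apply_of_lt x hi

lemma sgnSeg_update_of_inDelta {l : ℕ} {F : ℕ → S.FaceS} {x : S.FaceS}
    (hx : inDelta S x (F (l + 1))) {j : ℕ} (hj : l + 1 ≤ j) :
    sgnSeg S l (update F l x) j = -sgnSeg S (l + 1) F j := by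
  rw [sgnSeg_eq_neg_sgnSeg_succ_of_inDelta
    (by rwa [update_self, update_apply_of_lt x l.lt_succ_self]) hj]
  exact congrArg Neg.neg (sgnSeg_congr fun i hi _ => update_apply_of_lt x hi)

lemma inBoundary_fst_add_one {x q : S.FaceS} (h : inBoundary S x q) : x.1 + 1 = q.1 := by
  rcases q with ⟨_ | k, q⟩
  · rcases h with ⟨h, -⟩ | h
    · exact absurd h (lt_irrefl 0)
    · exact h.elim
  · rcases h with ⟨-, rfl⟩ | ⟨h, -⟩
    · rfl
    · simp [h]

lemma not_inDelta_of_gammaS_eq (hS : IsOpetope S) {x q : S.FaceS} (h : gammaS S q = x) :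
    ¬ inDelta S x q :=
  fun hd => hS.strict x (.single ⟨q, hd, h⟩)

lemma pencilLt_total (hS : IsOpetope S) {x a b : S.FaceS}
    (ha : inBoundary S x a) (hb : inBoundary S x b) (hne : a ≠ b) :
    pencilLt S x a b ∨ pencilLt S x b a := by
  rcases ha with hga | hda <;> rcases hb with hgb | hdb
  · rcases hS.pencil_gamma x a b hga hgb with h | h | h
    · exact absurd h hne
    · exact .inr (.inr (.inr ⟨hgb, hga, h⟩))
    · exact .inl (.inr (.inr ⟨hga, hgb, h⟩))
  · exact .inr (.inl ⟨hga, hdb⟩)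
  · exact .inl (.inl ⟨hgb, hda⟩)
  · rcases hS.pencil_delta x a b hda hdb with h | h | h
    · exact absurd h hne
    · exact .inl (.inr (.inl ⟨hda, hdb, h⟩))
    · exact .inr (.inr (.inl ⟨hdb, hda, h⟩))

lemma pencilLt_asymm (hS : IsOpetope S) {x a b : S.FaceS}
    (h₁ : pencilLt S x a b) (h₂ : pencilLt S x b a) : False := by
  have hγδ : ∀ {y}, inGammaS S x y → ¬ inDelta S x y := fun hg => not_inDelta_of_gammaS_eq hS hg.2
  rcases h₁ with ⟨hgb, hda⟩ | ⟨hda, hdb, hab⟩ | ⟨hga, hgb, hba⟩ <;>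
    rcases h₂ with ⟨hga', hdb'⟩ | ⟨hdb', hda', hba'⟩ | ⟨hgb', hga', hab'⟩
  · exact hγδ hga' hda
  · exact hγδ hgb hdb'
  · exact hγδ hga' hda
  · exact hγδ hga' hda
  · exact hS.strict a (hab.trans hba')
  · exact hγδ hgb' hdb
  · exact hγδ hgb hdb'
  · exact hγδ hga hda'
  · exact hS.strict a (hab'.trans hba)

/-- `pencilLt` read in the direction prescribed by the sign `s` of the segment below. -/
def signedPencilLt (S : PHg) (s : ℤ) (x a b : S.FaceS) : Prop :=
  (s = 1 ∧ pencilLt S x a b) ∨ (s = -1 ∧ pencilLt S x b a)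

lemma signedPencilLt_one {x a b : S.FaceS} : signedPencilLt S 1 x a b ↔ pencilLt S x a b := by
  simp [signedPencilLt]

lemma signedPencilLt_neg {s : ℤ} (hs : s = 1 ∨ s = -1) {x a b : S.FaceS} :
    signedPencilLt S (-s) x a b ↔ signedPencilLt S s x b a := by
  rcases hs with rfl | rfl <;> simp [signedPencilLt]

lemma signedPencilLt_total (hS : IsOpetope S) {s : ℤ} (hs : s = 1 ∨ s = -1) {x a b : S.FaceS}
    (ha : inBoundary S x a) (hb : inBoundary S x b) (hne : a ≠ b) :
    signedPencilLt S s x a b ∨ signedPencilLt S s x b a := by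
  rcases hs with rfl | rfl <;> rcases pencilLt_total hS ha hb hne with h | h <;>
    simp [signedPencilLt, h]

lemma signedPencilLt_asymm (hS : IsOpetope S) {s : ℤ} {x a b : S.FaceS}
    (hab : signedPencilLt S s x a b) (hba : signedPencilLt S s x b a) : False := by
  rcases hab with ⟨rfl, hab⟩ | ⟨rfl, hab⟩ <;> rcases hba with ⟨hs, hba⟩ | ⟨hs, hba⟩ <;>
    first | exact pencilLt_asymm hS hab hba | norm_num at hs

lemma flagLt_iff_of_eqOn {l j m : ℕ} {F G : ℕ → S.FaceS} (hlj : l ≤ j)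
    (hFG : ∀ i, l ≤ i → i ≤ j → F i = G i) :
    flagLt S l m F G ↔ ∃ k, j < k ∧ k ≤ m ∧ (∀ i, l ≤ i → i < k → F i = G i) ∧ F k ≠ G k ∧
      signedPencilLt S (sgnSeg S l F (k - 1)) (F (k - 1)) (F k) (G k) := by
  constructor
  · rintro ⟨k, hlk, hkm, hag, hne, hc⟩
    have hjk : j < k := by
      by_contra! h
      exact hne (hFG k hlk h)
    refine ⟨k, hjk, hkm, hag, hne, ?_⟩
    rcases hc with ⟨rfl, -⟩ | ⟨-, hs, hp⟩ | ⟨-, hs, hp⟩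
    · omega
    · exact .inl ⟨hs, hp⟩
    · exact .inr ⟨hs, hp⟩
  · rintro ⟨k, hjk, hkm, hag, hne, ⟨hs, hp⟩ | ⟨hs, hp⟩⟩
    · exact ⟨k, by omega, hkm, hag, hne, .inr (.inl ⟨by omega, hs, hp⟩)⟩
    · exact ⟨k, by omega, hkm, hag, hne, .inr (.inr ⟨by omega, hs, hp⟩)⟩

lemma flagLt_iff_of_apply_eq {l m : ℕ} {F G : ℕ → S.FaceS} (hFG : F l = G l) :
    flagLt S l m F G ↔ ∃ k, l < k ∧ k ≤ m ∧ (∀ i, l ≤ i → i < k → F i = G i) ∧ F k ≠ G k ∧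
      signedPencilLt S (sgnSeg S l F (k - 1)) (F (k - 1)) (F k) (G k) :=
  flagLt_iff_of_eqOn le_rfl fun i h₁ h₂ => by rwa [le_antisymm h₂ h₁]

lemma not_eqOnFl_of_flagLt {l m : ℕ} {F G : ℕ → S.FaceS} (h : flagLt S l m F G) :
    ¬ EqOnFl l m F G := by
  obtain ⟨k, hlk, hkm, -, hne, -⟩ := h
  exact fun he => hne (he k hlk hkm)

lemma flagLt_asymm (hS : IsOpetope S) {l m : ℕ} {F G : ℕ → S.FaceS} (hFG : F l = G l)
    (h₁ : flagLt S l m F G) (h₂ : flagLt S l m G F) : False := by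
  obtain ⟨k, hlk, -, hag, hne, hp⟩ := (flagLt_iff_of_apply_eq hFG).1 h₁
  obtain ⟨k', hlk', -, hag', hne', hp'⟩ := (flagLt_iff_of_apply_eq hFG.symm).1 h₂
  obtain rfl : k = k' := by
    rcases lt_trichotomy k k' with h | h | h
    · exact absurd (hag' k hlk.le h).symm hne
    · exact h
    · exact absurd (hag k' (by omega) h).symm hne'
  rw [sgnSeg_congr fun i hi _ => hag' i hi (by omega), hag' (k - 1) (by omega) (by omega)] at hp'
  exact signedPencilLt_asymm hS hp hp'

lemma MemFlags.fst_bot {l m : ℕ} {t b : S.FaceS} {F : ℕ → S.FaceS}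
    (hF : MemFlags S l m t b F) (hlm : l ≤ m) : b.1 = l :=
  hF.2.2 ▸ hF.1.1 l le_rfl hlm

lemma MemFlags.inBoundary_sub_one {l m : ℕ} {t b : S.FaceS} {F : ℕ → S.FaceS}
    (hF : MemFlags S l m t b F) {k : ℕ} (hlk : l < k) (hkm : k ≤ m) :
    inBoundary S (F (k - 1)) (F k) := by
  simpa only [Nat.sub_add_cancel (by omega : 1 ≤ k)] using hF.1.2 (k - 1) (by omega) (by omega)

lemma flagLt_or_flagLt_of_not_eqOnFl (hS : IsOpetope S) {l m : ℕ} {t b : S.FaceS}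
    {F G : ℕ → S.FaceS} (hF : MemFlags S l m t b F) (hG : MemFlags S l m t b G)
    (hne : ¬ EqOnFl l m F G) : flagLt S l m F G ∨ flagLt S l m G F := by
  have hex : ∃ k, l ≤ k ∧ k ≤ m ∧ F k ≠ G k := by
    simpa [EqOnFl] using hne
  obtain ⟨hlk, hkm, hnek⟩ := Nat.find_spec hex
  set k := Nat.find hex
  have hag : ∀ i, l ≤ i → i < k → F i = G i := fun i hi hik => by
    by_contra h
    exact Nat.find_min hex hik ⟨hi, by omega, h⟩
  have hFG : F l = G l := hF.2.2.trans hG.2.2.symm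
  have hlk' : l < k := lt_of_le_of_ne hlk fun h => hnek (h ▸ hFG)
  have hprev : G (k - 1) = F (k - 1) := (hag _ (by omega) (by omega)).symm
  have hsgn : sgnSeg S l G (k - 1) = sgnSeg S l F (k - 1) :=
    sgnSeg_congr fun i hi _ => (hag i hi (by omega)).symm
  rw [flagLt_iff_of_apply_eq hFG, flagLt_iff_of_apply_eq hFG.symm]
  rcases signedPencilLt_total hS (sgnSeg_eq_one_or_eq_neg_one l F (k - 1))
    (hF.inBoundary_sub_one hlk' hkm) (hprev ▸ hG.inBoundary_sub_one hlk' hkm) hnek with hp | hp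
  · exact .inl ⟨k, hlk', hkm, hag, hnek, hp⟩
  · exact .inr ⟨k, hlk', hkm, fun i hi hik => (hag i hi hik).symm, Ne.symm hnek,
      by rwa [hsgn, hprev]⟩

/-- In a linear order the successor `F` of `G` is also characterised from below. -/
lemma SuccFl.eqOnFl_or_flagLt_of_flagLt (hS : IsOpetope S) {l m : ℕ} {t b : S.FaceS}
    {F G H : ℕ → S.FaceS} (h : SuccFl S l m t b G F) (hH : MemFlags S l m t b H)
    (hHF : flagLt S l m H F) : EqOnFl l m G H ∨ flagLt S l m H G := by
  obtain ⟨hG, hF, -, hmin⟩ := h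
  by_cases he : EqOnFl l m G H
  · exact .inl he
  refine .inr ((flagLt_or_flagLt_of_not_eqOnFl hS hG hH he).resolve_left fun hGH => ?_)
  rcases hmin H hH hGH with hFH | hFH
  · exact not_eqOnFl_of_flagLt hHF fun i h₁ h₂ => (hFH i h₁ h₂).symm
  · exact flagLt_asymm hS (hF.2.2.trans hH.2.2.symm) hFH hHF

lemma MemFlags.update {l n : ℕ} {t x y : S.FaceS} {F : ℕ → S.FaceS}
    (hF : MemFlags S (l + 1) n t y F) (hln : l + 1 ≤ n) (hx : inBoundary S x y) :
    MemFlags S l n t x (update F l x) := by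
  refine ⟨⟨fun i hli hin => ?_, fun i hli hin => ?_⟩, ?_, update_self l x F⟩
  · rcases hli.eq_or_lt with rfl | hlt
    · have hdim := (inBoundary_fst_add_one hx).trans (hF.fst_bot hln)
      rw [update_self]
      omega
    · rw [update_apply_of_lt x hlt]
      exact hF.1.1 i hlt hin
  · rcases hli.eq_or_lt with rfl | hlt
    · rwa [update_self, update_apply_of_lt x (Nat.lt_succ_self _), hF.2.2]
    · rw [update_apply_of_lt x hlt, update_apply_of_lt x (by omega)]
      exact hF.1.2 i hlt hin
  · rw [update_apply_of_lt x (by omega)]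
    exact hF.2.1

lemma MemFlags.of_apply_succ {l n : ℕ} {t x y : S.FaceS} {H : ℕ → S.FaceS}
    (hH : MemFlags S l n t x H) (hy : H (l + 1) = y) : MemFlags S (l + 1) n t y H :=
  ⟨⟨fun i hi hin => hH.1.1 i (by omega) hin, fun i hi hin => hH.1.2 i (by omega) hin⟩,
    hH.2.1, hy⟩

lemma EqOnFl.update {l m : ℕ} {x : S.FaceS} {G H : ℕ → S.FaceS}
    (h : EqOnFl (l + 1) m G H) (hH : H l = x) : EqOnFl l m (update G l x) H := by
  intro i hli him
  rcases hli.eq_or_lt with rfl | hlt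
  · rw [update_self, hH]
  · rw [update_apply_of_lt x hlt]
    exact h i hlt him

lemma flagLt_update_iff {l n : ℕ} {x : S.FaceS} {F G : ℕ → S.FaceS}
    (hFG : F (l + 1) = G (l + 1)) :
    flagLt S l n (update F l x) (update G l x) ↔
      ∃ k, l + 1 < k ∧ k ≤ n ∧ (∀ i, l + 1 ≤ i → i < k → F i = G i) ∧ F k ≠ G k ∧
        signedPencilLt S (sgnSeg S l (update F l x) (k - 1)) (F (k - 1)) (F k) (G k) := by
  have hbot : ∀ i, l ≤ i → i ≤ l + 1 → update F l x i = update G l x i := by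
    intro i h₁ h₂
    rcases h₁.eq_or_lt with rfl | hlt
    · rw [update_self, update_self]
    · obtain rfl : i = l + 1 := by omega
      rwa [update_apply_of_lt x hlt, update_apply_of_lt x hlt]
  rw [flagLt_iff_of_eqOn (Nat.le_succ l) hbot]
  refine exists_congr fun k => and_congr_right fun hk => ?_
  rw [forall_update_eq_update_iff, update_apply_of_lt (F := F) x (by omega : l < k),
    update_apply_of_lt (F := G) x (by omega : l < k),
    update_apply_of_lt (F := F) x (by omega : l < k - 1)]

lemma flagLt_update_iff_of_not_inDelta {l n : ℕ} {x y : S.FaceS} {F G : ℕ → S.FaceS}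
    (hF : F (l + 1) = y) (hG : G (l + 1) = y) (hx : ¬ inDelta S x y) :
    flagLt S l n (update F l x) (update G l x) ↔ flagLt S (l + 1) n F G := by
  rw [flagLt_update_iff (hF.trans hG.symm), flagLt_iff_of_apply_eq (hF.trans hG.symm)]
  simp only [sgnSeg_update_of_not_inDelta (hF ▸ hx)]

lemma flagLt_update_iff_of_inDelta {l n : ℕ} {x y : S.FaceS} {F G : ℕ → S.FaceS}
    (hF : F (l + 1) = y) (hG : G (l + 1) = y) (hx : inDelta S x y) :
    flagLt S l n (update F l x) (update G l x) ↔ flagLt S (l + 1) n G F := by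
  rw [flagLt_update_iff (hF.trans hG.symm), flagLt_iff_of_apply_eq (hG.trans hF.symm)]
  refine exists_congr fun k => and_congr_right fun hk => and_congr_right fun _ => ?_
  have key (hag : ∀ i, l + 1 ≤ i → i < k → F i = G i) :
      signedPencilLt S (sgnSeg S l (update F l x) (k - 1)) (F (k - 1)) (F k) (G k) ↔
        signedPencilLt S (sgnSeg S (l + 1) G (k - 1)) (G (k - 1)) (G k) (F k) := by
    rw [sgnSeg_update_of_inDelta (hF ▸ hx) (by omega),
      signedPencilLt_neg (sgnSeg_eq_one_or_eq_neg_one _ _ _),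
      sgnSeg_congr fun i hi _ => hag i hi (by omega), hag (k - 1) (by omega) (by omega)]
  constructor
  · rintro ⟨hag, hne, hp⟩
    exact ⟨fun i hi hik => (hag i hi hik).symm, hne.symm, (key hag).1 hp⟩
  · rintro ⟨hag, hne, hp⟩
    have hag' : ∀ i, l + 1 ≤ i → i < k → F i = G i := fun i hi hik => (hag i hi hik).symm
    exact ⟨hag', hne.symm, (key hag').2 hp⟩

lemma flagLt_update_iff_pencilLt {l n : ℕ} (hln : l + 1 ≤ n) {x : S.FaceS}
    {F H : ℕ → S.FaceS} (hH : H l = x) (hne : F (l + 1) ≠ H (l + 1)) :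
    flagLt S l n (update F l x) H ↔ pencilLt S x (F (l + 1)) (H (l + 1)) := by
  have hsucc : update F l x (l + 1) = F (l + 1) := update_apply_of_lt x l.lt_succ_self
  rw [flagLt_iff_of_apply_eq (by rw [update_self, hH])]
  constructor
  · rintro ⟨k, hlk, -, hag, -, hp⟩
    obtain rfl : k = l + 1 := by
      by_contra hk
      exact hne (hsucc ▸ hag (l + 1) le_self_add (by omega))
    rwa [Nat.add_sub_cancel, sgnSeg_of_le le_rfl, signedPencilLt_one, update_self, hsucc] at hp
  · intro hp
    refine ⟨l + 1, l.lt_succ_self, hln, fun i hi hik => ?_, by rwa [hsucc], ?_⟩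
    · obtain rfl : i = l := by omega
      rw [update_self, hH]
    · rwa [Nat.add_sub_cancel, sgnSeg_of_le le_rfl, signedPencilLt_one, update_self, hsucc]

lemma flagLt_update_of_flagLt_update {l n : ℕ} (hln : l + 1 ≤ n) {x y : S.FaceS}
    {F G H : ℕ → S.FaceS} (hF : F (l + 1) = y) (hG : G (l + 1) = y) (hH : H l = x)
    (hHy : H (l + 1) ≠ y) (h : flagLt S l n (update F l x) H) :
    flagLt S l n (update G l x) H := by
  rw [flagLt_update_iff_pencilLt hln hH (hF ▸ Ne.symm hHy)] at h
  rwa [flagLt_update_iff_pencilLt hln hH (hG ▸ Ne.symm hHy), hG, ← hF]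

theorem SuccFl.update_of_gammaS_eq (hS : IsOpetope S) {l n : ℕ} (hln : l + 1 ≤ n)
    {t x y : S.FaceS} (hx : x = gammaS S y) {F G : ℕ → S.FaceS}
    (h : SuccFl S (l + 1) n t y F G) :
    SuccFl S l n t x (update F l x) (update G l x) := by
  obtain ⟨hF, hG, hFG, hmin⟩ := h
  have hγ : inGammaS S x y := ⟨by rw [hF.fst_bot hln]; omega, hx.symm⟩
  have hδ : ¬ inDelta S x y := not_inDelta_of_gammaS_eq hS hx.symm
  refine ⟨MemFlags.update hF hln (.inl hγ), MemFlags.update hG hln (.inl hγ),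
    (flagLt_update_iff_of_not_inDelta hF.2.2 hG.2.2 hδ).2 hFG, fun H hH hlt => ?_⟩
  by_cases hHy : H (l + 1) = y
  · have hHx : update H l x = H := hH.2.2 ▸ update_eq_self l H
    rw [← hHx, flagLt_update_iff_of_not_inDelta hF.2.2 hHy hδ] at hlt
    rcases hmin H (hH.of_apply_succ hHy) hlt with he | hGH
    · exact .inl (he.update hH.2.2)
    · exact .inr (hHx ▸ (flagLt_update_iff_of_not_inDelta hG.2.2 hHy hδ).2 hGH)
  · exact .inr (flagLt_update_of_flagLt_update hln hF.2.2 hG.2.2 hH.2.2 hHy hlt)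

theorem SuccFl.update_of_inDelta (hS : IsOpetope S) {l n : ℕ} (hln : l + 1 ≤ n)
    {t x y : S.FaceS} (hx : inDelta S x y) {F G : ℕ → S.FaceS}
    (h : SuccFl S (l + 1) n t y G F) :
    SuccFl S l n t x (update F l x) (update G l x) := by
  have hG : MemFlags S (l + 1) n t y G := h.1
  have hF : MemFlags S (l + 1) n t y F := h.2.1
  refine ⟨hF.update hln (.inr hx), hG.update hln (.inr hx),
    (flagLt_update_iff_of_inDelta hF.2.2 hG.2.2 hx).2 h.2.2.1, fun H hH hlt => ?_⟩
  by_cases hHy : H (l + 1) = y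
  · have hHx : update H l x = H := hH.2.2 ▸ update_eq_self l H
    rw [← hHx, flagLt_update_iff_of_inDelta hF.2.2 hHy hx] at hlt
    rcases h.eqOnFl_or_flagLt_of_flagLt hS (hH.of_apply_succ hHy) hlt with he | hHG
    · exact .inl (he.update hH.2.2)
    · exact .inr (hHx ▸ (flagLt_update_iff_of_inDelta hG.2.2 hHy hx).2 hHG)
  · exact .inr (flagLt_update_of_flagLt_update hln hF.2.2 hG.2.2 hH.2.2 hHy hlt)

end FlagExtension

theorem flag_extension_preserves_successor_general
    (S : PHg) (hS : IsOpetope S) (n : ℕ)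
    (t : S.FaceS)
    (l : ℕ) (hln : l + 1 ≤ n)
    (xl1 xl : S.FaceS) :
    ((xl = gammaS S xl1) →
      (∀ F G, MemFlags S (l+1) n t xl1 F → MemFlags S (l+1) n t xl1 G →
        flagLt S (l+1) n F G →
        flagLt S l n (Function.update F l xl) (Function.update G l xl)) ∧
      (∀ F G, SuccFl S (l+1) n t xl1 F G →
        SuccFl S l n t xl (Function.update F l xl) (Function.update G l xl))) ∧
    ((inDelta S xl xl1) →
      (∀ F G, MemFlags S (l+1) n t xl1 F → MemFlags S (l+1) n t xl1 G →
        flagLt S (l+1) n G F →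
        flagLt S l n (Function.update F l xl) (Function.update G l xl)) ∧
      (∀ F G, SuccFl S (l+1) n t xl1 G F →
        SuccFl S l n t xl (Function.update F l xl) (Function.update G l xl))) := by
  refine ⟨fun hγ => ⟨fun F G hF hG hFG => ?_, fun F G h => h.update_of_gammaS_eq hS hln hγ⟩,
    fun hδ => ⟨fun F G hF hG hGF => ?_, fun F G h => h.update_of_inDelta hS hln hδ⟩⟩
  · exact (flagLt_update_iff_of_not_inDelta hF.2.2 hG.2.2
      (not_inDelta_of_gammaS_eq hS hγ.symm)).2 hFG
  · exact (flagLt_update_iff_of_inDelta hF.2.2 hG.2.2 hδ).2 hGF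

/-- Extending flags by a face `x_l ∈ ∂(x_{l+1})` preserves the
successor function and the flag order: covariantly when `x_l = γ(x_{l+1})` and
contravariantly (from the opposite order) when `x_l ∈ δ(x_{l+1})`. -/
theorem flag_extension_preserves_successor
    (S : PHg) (hS : IsOpetope S) (n : ℕ) (hn : hasDim S n)
    (t : S.FaceS) (ht : t.1 = n)
    (l : ℕ) (hln : l + 1 ≤ n)
    (xl1 xl : S.FaceS) (hd1 : xl1.1 = l + 1) :
    ((xl = gammaS S xl1) →
      (∀ F G, MemFlags S (l+1) n t xl1 F → MemFlags S (l+1) n t xl1 G →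
        flagLt S (l+1) n F G →
        flagLt S l n (Function.update F l xl) (Function.update G l xl)) ∧
      (∀ F G, SuccFl S (l+1) n t xl1 F G →
        SuccFl S l n t xl (Function.update F l xl) (Function.update G l xl))) ∧
    ((inDelta S xl xl1) →
      (∀ F G, MemFlags S (l+1) n t xl1 F → MemFlags S (l+1) n t xl1 G →
        flagLt S (l+1) n G F →
        flagLt S l n (Function.update F l xl) (Function.update G l xl)) ∧
      (∀ F G, SuccFl S (l+1) n t xl1 G F →
        SuccFl S l n t xl (Function.update F l xl) (Function.update G l xl))) :=
  flag_extension_preserves_successor_general S hS n t l hln xl1 xl
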